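/- arXiv:1303.4795 — 5 statements merged into one kernel-verified Lean document; each statement's English description precedes it below -/
import Mathlib

section
/- Let μ₀ = N(0, C) be a nondegenerate centered Gaussian measure on ℝⁿ with covariance matrix C = diag(λ₁,…,λₙ) where λ₁ ≥ λ₂ ≥ … ≥ λₙ > 0, and set a₁ = 1/λ₁. Then for every δ > 0 and every z ∈ ℝⁿ, the ratio μ₀(B(z,δ))/μ₀(B(0,δ)) is at most exp((a₁/2)δ²) · exp(−(a₁/2)(|z| − δ)²). -/
/-!
Write `a₁ = min aⱼ` and split the weight as `exp (-(a₁/2)|x|²) · exp (-½ Σ (aⱼ - a₁) xⱼ²)`.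
When `|z| > δ`, the first factor is at most `exp (-(a₁/2)(|z| - δ)²)` on `B(z, δ)` and at least
`exp (-(a₁/2)δ²)` on `B(0, δ)`, so it remains to show that the second factor has at least as much
mass on `B(0, δ)` as on `B(z, δ)`. This is Anderson's inequality for a product of even,
radially nonincreasing one-dimensional factors: move the centre to `0` one coordinate at a time;
each step is the one-dimensional inequality, which holds because the reflection `x ↦ c - x` maps
`B(c, r) \ B(0, r)` onto `B(0, r) \ B(c, r)` while bringing points closer to `0`.
When `|z| ≤ δ` the right-hand side is at least `1` and Anderson's inequality for the weight itself
suffices.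
-/

open MeasureTheory Metric Real
open scoped BigOperators ENNReal

section Reflection

variable {E : Type*} [NormedAddCommGroup E] [MeasurableSpace E] [BorelSpace E]
  {μ : Measure E} [μ.IsAddLeftInvariant] [μ.IsNegInvariant]

theorem setLIntegral_ball_le_setLIntegral_ball_zero {g : E → ℝ≥0∞}
    (hg : ∀ x y, ‖y‖ ≤ ‖x‖ → g x ≤ g y) (c : E) (r : ℝ) :
    ∫⁻ x in ball c r, g x ∂μ ≤ ∫⁻ x in ball 0 r, g x ∂μ := by
  have hpre : (c - ·) ⁻¹' (ball 0 r \ ball c r) = ball c r \ ball 0 r := by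
    ext x
    simp [dist_eq_norm, norm_sub_rev c x]
  have hreflect :
      ∫⁻ x in ball c r \ ball 0 r, g (c - x) ∂μ = ∫⁻ x in ball 0 r \ ball c r, g x ∂μ := by
    rw [← hpre]
    exact (μ.measurePreserving_sub_left c).setLIntegral_comp_preimage_emb
      (MeasurableEquiv.subLeft c).measurableEmbedding g _
  calc ∫⁻ x in ball c r, g x ∂μ
      = ∫⁻ x in ball c r ∩ ball 0 r, g x ∂μ + ∫⁻ x in ball c r \ ball 0 r, g x ∂μ :=
        (lintegral_inter_add_sdiff g _ measurableSet_ball).symm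
    _ ≤ ∫⁻ x in ball 0 r ∩ ball c r, g x ∂μ + ∫⁻ x in ball c r \ ball 0 r, g (c - x) ∂μ := by
        rw [Set.inter_comm]
        gcongr 1
        refine setLIntegral_mono' (measurableSet_ball.diff measurableSet_ball) fun x hx ↦ ?_
        refine hg _ _ (le_of_lt ?_)
        simp only [Set.mem_sdiff, mem_ball, dist_eq_norm, sub_zero, not_lt] at hx
        rw [norm_sub_rev]
        exact hx.1.trans_le hx.2
    _ = ∫⁻ x in ball 0 r, g x ∂μ := by
        rw [hreflect, lintegral_inter_add_sdiff g _ measurableSet_ball]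

end Reflection

section Anderson

variable {ι : Type*} [Fintype ι] {f : ι → ℝ → ℝ≥0∞}

theorem indicator_sum_sq_sub_lt_update [DecidableEq ι] (c x : ι → ℝ) (ρ : ℝ) (j : ι) (t : ℝ) :
    {y : ι → ℝ | ∑ i, (y i - c i) ^ 2 < ρ}.indicator (fun y ↦ ∏ i, f i (y i))
        (Function.update x j t) =
      (ball (c j) √(ρ - ∑ i ∈ Finset.univ.erase j, (x i - c i) ^ 2)).indicator (f j) t *
        ∏ i ∈ Finset.univ.erase j, f i (x i) := by
  have hsum : ∑ i, (Function.update x j t i - c i) ^ 2 =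
      (t - c j) ^ 2 + ∑ i ∈ Finset.univ.erase j, (x i - c i) ^ 2 := by
    rw [← Finset.add_sum_erase _ _ (Finset.mem_univ j), Function.update_self]
    congr 1
    refine Finset.sum_congr rfl fun i hi ↦ ?_
    rw [Function.update_of_ne (Finset.ne_of_mem_erase hi)]
  have hprod :
      ∏ i, f i (Function.update x j t i) = f j t * ∏ i ∈ Finset.univ.erase j, f i (x i) := by
    rw [← Finset.mul_prod_erase _ _ (Finset.mem_univ j), Function.update_self]
    congr 1
    refine Finset.prod_congr rfl fun i hi ↦ ?_
    rw [Function.update_of_ne (Finset.ne_of_mem_erase hi)]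
  have hmem : (t - c j) ^ 2 + ∑ i ∈ Finset.univ.erase j, (x i - c i) ^ 2 < ρ ↔
      t ∈ ball (c j) √(ρ - ∑ i ∈ Finset.univ.erase j, (x i - c i) ^ 2) := by
    rw [mem_ball, Real.dist_eq, Real.lt_sqrt (abs_nonneg _), sq_abs, lt_sub_iff_add_lt]
  by_cases h : t ∈ ball (c j) √(ρ - ∑ i ∈ Finset.univ.erase j, (x i - c i) ^ 2)
  · rw [Set.indicator_of_mem h, Set.indicator_of_mem (by rwa [Set.mem_ofPred_eq, hsum, hmem]),
      hprod]
  · rw [Set.indicator_of_notMem h,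
      Set.indicator_of_notMem (by rwa [Set.mem_ofPred_eq, hsum, hmem]), zero_mul]

variable (hf_meas : ∀ i, Measurable (f i)) (hf : ∀ i x y, ‖y‖ ≤ ‖x‖ → f i x ≤ f i y)

include hf_meas hf in
theorem setLIntegral_sum_sq_sub_lt_le_update_zero [DecidableEq ι] (c : ι → ℝ) (ρ : ℝ) (j : ι) :
    ∫⁻ x in {x : ι → ℝ | ∑ i, (x i - c i) ^ 2 < ρ}, ∏ i, f i (x i) ≤
      ∫⁻ x in {x : ι → ℝ | ∑ i, (x i - Function.update c j 0 i) ^ 2 < ρ}, ∏ i, f i (x i) := by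
  have hS : ∀ c : ι → ℝ, MeasurableSet {x : ι → ℝ | ∑ i, (x i - c i) ^ 2 < ρ} := fun c ↦
    measurableSet_lt (by fun_prop) measurable_const
  have hF : Measurable fun x : ι → ℝ ↦ ∏ i, f i (x i) :=
    Finset.measurable_prod _ fun i _ ↦ (hf_meas i).comp (measurable_pi_apply i)
  have hrest : ∀ x : ι → ℝ, ∑ i ∈ Finset.univ.erase j, (x i - Function.update c j 0 i) ^ 2 =
      ∑ i ∈ Finset.univ.erase j, (x i - c i) ^ 2 := fun x ↦
    Finset.sum_congr rfl fun i hi ↦ by rw [Function.update_of_ne (Finset.ne_of_mem_erase hi)]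
  rw [← lintegral_indicator (hS _), ← lintegral_indicator (hS _), volume_pi]
  refine lintegral_le_of_lmarginal_le {j} (hF.indicator (hS _)) (hF.indicator (hS _)) ?_
  rw [lmarginal_singleton, lmarginal_singleton]
  intro x
  simp only [indicator_sum_sq_sub_lt_update, Function.update_self, hrest]
  rw [lintegral_mul_const _ ((hf_meas j).indicator measurableSet_ball),
    lintegral_mul_const _ ((hf_meas j).indicator measurableSet_ball),
    lintegral_indicator measurableSet_ball, lintegral_indicator measurableSet_ball]
  gcongr 1
  exact setLIntegral_ball_le_setLIntegral_ball_zero (hf j) _ _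

include hf_meas hf in
theorem setLIntegral_sum_sq_sub_lt_le_sum_sq_lt (c : ι → ℝ) (ρ : ℝ) :
    ∫⁻ x in {x : ι → ℝ | ∑ i, (x i - c i) ^ 2 < ρ}, ∏ i, f i (x i) ≤
      ∫⁻ x in {x : ι → ℝ | ∑ i, x i ^ 2 < ρ}, ∏ i, f i (x i) := by
  classical
  have hzeroed : ∀ s : Finset ι, ∫⁻ x in {x : ι → ℝ | ∑ i, (x i - c i) ^ 2 < ρ}, ∏ i, f i (x i) ≤
      ∫⁻ x in {x : ι → ℝ | ∑ i, (x i - s.piecewise (0 : ι → ℝ) c i) ^ 2 < ρ}, ∏ i, f i (x i) := by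
    intro s
    induction s using Finset.induction_on with
    | empty => simp
    | insert j s _ ih =>
      rw [Finset.piecewise_insert, Pi.zero_apply]
      exact ih.trans (setLIntegral_sum_sq_sub_lt_le_update_zero hf_meas hf _ ρ j)
  simpa using hzeroed Finset.univ

include hf_meas hf in
theorem setLIntegral_prod_ball_le_setLIntegral_prod_ball_zero (c : EuclideanSpace ℝ ι) (r : ℝ) :
    ∫⁻ x : EuclideanSpace ℝ ι in ball c r, ∏ i, f i (x i) ≤
      ∫⁻ x : EuclideanSpace ℝ ι in ball 0 r, ∏ i, f i (x i) := by
  rcases le_or_gt r 0 with hr | hr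
  · simp [ball_eq_empty.2 hr]
  have hball : ∀ c : EuclideanSpace ℝ ι,
      WithLp.toLp 2 ⁻¹' ball c r = {x : ι → ℝ | ∑ i, (x i - c i) ^ 2 < r ^ 2} := by
    intro c
    ext x
    simp [EuclideanSpace.dist_eq, Real.dist_eq, sq_abs, Real.sqrt_lt' hr]
  have htransfer : ∀ c : EuclideanSpace ℝ ι,
      ∫⁻ x : EuclideanSpace ℝ ι in ball c r, ∏ i, f i (x i) =
        ∫⁻ x in {x : ι → ℝ | ∑ i, (x i - c i) ^ 2 < r ^ 2}, ∏ i, f i (x i) := by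
    intro c
    rw [← hball, ← (PiLp.volume_preserving_toLp ι).setLIntegral_comp_preimage_emb
      (MeasurableEquiv.toLp 2 (ι → ℝ)).measurableEmbedding]
  rw [htransfer, htransfer]
  simpa using setLIntegral_sum_sq_sub_lt_le_sum_sq_lt hf_meas hf c (r ^ 2)

end Anderson

section DiagGaussian

variable {ι : Type*} [Fintype ι]

noncomputable def diagGaussianWeight (a : ι → ℝ) (x : EuclideanSpace ℝ ι) : ℝ :=
  exp (-(1/2) * ∑ j, a j * (x j)^2)

theorem continuous_diagGaussianWeight (a : ι → ℝ) : Continuous (diagGaussianWeight a) := by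
  unfold diagGaussianWeight
  fun_prop

theorem diagGaussianWeight_pos (a : ι → ℝ) (x : EuclideanSpace ℝ ι) :
    0 < diagGaussianWeight a x :=
  exp_pos _

theorem integrableOn_diagGaussianWeight_ball (a : ι → ℝ) (c : EuclideanSpace ℝ ι) (r : ℝ) :
    IntegrableOn (diagGaussianWeight a) (ball c r) :=
  ((continuous_diagGaussianWeight a).continuousOn.integrableOn_compact
    (isCompact_closedBall c r)).mono_set ball_subset_closedBall

theorem ofReal_diagGaussianWeight (a : ι → ℝ) (x : EuclideanSpace ℝ ι) :
    ENNReal.ofReal (diagGaussianWeight a x) =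
      ∏ j, ENNReal.ofReal (exp (-(1/2) * (a j * x j ^ 2))) := by
  rw [← ENNReal.ofReal_prod_of_nonneg fun j _ ↦ (exp_pos _).le, ← exp_sum, ← Finset.mul_sum]
  rfl

theorem setIntegral_diagGaussianWeight_ball_le {a : ι → ℝ} (ha : ∀ j, 0 ≤ a j)
    (c : EuclideanSpace ℝ ι) (r : ℝ) :
    ∫ x in ball c r, diagGaussianWeight a x ≤ ∫ x in ball 0 r, diagGaussianWeight a x := by
  have hnonneg : ∀ s : Set (EuclideanSpace ℝ ι), 0 ≤ᵐ[volume.restrict s] diagGaussianWeight a :=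
    fun s ↦ Filter.Eventually.of_forall fun x ↦ (diagGaussianWeight_pos a x).le
  rw [integral_eq_lintegral_of_nonneg_ae (hnonneg _)
      (continuous_diagGaussianWeight a).aestronglyMeasurable,
    integral_eq_lintegral_of_nonneg_ae (hnonneg _)
      (continuous_diagGaussianWeight a).aestronglyMeasurable]
  refine ENNReal.toReal_mono (integrableOn_diagGaussianWeight_ball a 0 r).lintegral_lt_top.ne ?_
  simp only [ofReal_diagGaussianWeight]
  refine setLIntegral_prod_ball_le_setLIntegral_prod_ball_zero
    (f := fun j t ↦ ENNReal.ofReal (exp (-(1/2) * (a j * t ^ 2)))) (fun j ↦ by fun_prop)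
    (fun j s t hts ↦ ?_) c r
  have hsq : a j * t ^ 2 ≤ a j * s ^ 2 := mul_le_mul_of_nonneg_left (sq_le_sq.2 hts) (ha j)
  exact ENNReal.ofReal_le_ofReal (exp_le_exp.2 (by linarith))

theorem diagGaussianWeight_eq_mul (a : ι → ℝ) (m : ℝ) (x : EuclideanSpace ℝ ι) :
    diagGaussianWeight a x = exp (-(m / 2) * ‖x‖ ^ 2) * diagGaussianWeight (a · - m) x := by
  simp only [diagGaussianWeight, ← exp_add, EuclideanSpace.real_norm_sq_eq]
  congr 1
  rw [Finset.mul_sum, Finset.mul_sum, Finset.mul_sum, ← Finset.sum_add_distrib]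
  exact Finset.sum_congr rfl fun j _ ↦ by ring

theorem diagGaussianWeight_le_of_le_norm (a : ι → ℝ) {m ρ : ℝ} (hm : 0 ≤ m) (hρ : 0 ≤ ρ)
    {x : EuclideanSpace ℝ ι} (hx : ρ ≤ ‖x‖) :
    diagGaussianWeight a x ≤ exp (-(m / 2) * ρ ^ 2) * diagGaussianWeight (a · - m) x := by
  have hsq : ρ ^ 2 ≤ ‖x‖ ^ 2 := pow_le_pow_left₀ hρ hx 2
  rw [diagGaussianWeight_eq_mul a m x]
  exact mul_le_mul_of_nonneg_right (exp_le_exp.2 (by nlinarith)) (diagGaussianWeight_pos _ x).le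

theorem diagGaussianWeight_sub_le_of_norm_le (a : ι → ℝ) {m ρ : ℝ} (hm : 0 ≤ m)
    {x : EuclideanSpace ℝ ι} (hx : ‖x‖ ≤ ρ) :
    diagGaussianWeight (a · - m) x ≤ exp (m / 2 * ρ ^ 2) * diagGaussianWeight a x := by
  have hsq : ‖x‖ ^ 2 ≤ ρ ^ 2 := pow_le_pow_left₀ (norm_nonneg x) hx 2
  rw [diagGaussianWeight_eq_mul a m x, ← mul_assoc, ← exp_add]
  refine le_mul_of_one_le_left (diagGaussianWeight_pos _ x).le (one_le_exp ?_)
  nlinarith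

end DiagGaussian

theorem stmt0_general (n : ℕ) (hn : 0 < n) (lam : Fin n → ℝ) (hpos : ∀ j, 0 < lam j)
    (hmono : Antitone lam) (a : Fin n → ℝ) (ha : ∀ j, a j = (lam j)⁻¹)
    (δ : ℝ) (z : EuclideanSpace ℝ (Fin n)) :
    (∫ x in ball z δ, exp (-(1/2) * ∑ j, a j * (x j)^2)) /
      (∫ x in ball (0 : EuclideanSpace ℝ (Fin n)) δ, exp (-(1/2) * ∑ j, a j * (x j)^2))
    ≤ exp ((a ⟨0, hn⟩ / 2) * δ^2) * exp (-(a ⟨0, hn⟩ / 2) * (‖z‖ - δ)^2) := by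
  set a₁ := a ⟨0, hn⟩
  have ha_nonneg : ∀ j, 0 ≤ a j := fun j ↦ by rw [ha]; exact (inv_pos.2 (hpos j)).le
  have ha₁_le : ∀ j, a₁ ≤ a j := fun j ↦ by
    simp only [a₁, ha]; exact inv_anti₀ (hpos j) (hmono (Nat.zero_le _))
  have hintegral_nonneg : ∀ b r, 0 ≤ ∫ x in ball (0 : EuclideanSpace ℝ (Fin n)) r,
      diagGaussianWeight b x := fun b r ↦
    setIntegral_nonneg measurableSet_ball fun x _ ↦ (diagGaussianWeight_pos b x).le
  change (∫ x in ball z δ, diagGaussianWeight a x) / (∫ x in ball 0 δ, diagGaussianWeight a x) ≤ _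
  refine div_le_of_le_mul₀ (hintegral_nonneg a δ) (by positivity) ?_
  rcases le_or_gt ‖z‖ δ with hz | hz
  · have hK : 1 ≤ exp (a₁ / 2 * δ ^ 2) * exp (-(a₁ / 2) * (‖z‖ - δ) ^ 2) := by
      rw [← exp_add]
      have : 0 ≤ a₁ * ‖z‖ * (2 * δ - ‖z‖) :=
        mul_nonneg (mul_nonneg (ha_nonneg _) (norm_nonneg z)) (by linarith [norm_nonneg z])
      exact one_le_exp (by nlinarith)
    exact (setIntegral_diagGaussianWeight_ball_le ha_nonneg z δ).trans
      (le_mul_of_one_le_left (hintegral_nonneg a δ) hK)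
  calc ∫ x in ball z δ, diagGaussianWeight a x
      ≤ ∫ x in ball z δ, exp (-(a₁ / 2) * (‖z‖ - δ) ^ 2) * diagGaussianWeight (a · - a₁) x := by
        refine setIntegral_mono_on (integrableOn_diagGaussianWeight_ball a z δ)
          ((integrableOn_diagGaussianWeight_ball _ z δ).const_mul _) measurableSet_ball fun x hx ↦
          diagGaussianWeight_le_of_le_norm a (ha_nonneg _) (by linarith) ?_
        have := norm_sub_norm_le z x
        rw [mem_ball, dist_eq_norm, norm_sub_rev] at hx
        linarith
    _ ≤ exp (-(a₁ / 2) * (‖z‖ - δ) ^ 2) * ∫ x in ball 0 δ, diagGaussianWeight (a · - a₁) x := by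
        rw [integral_const_mul]
        exact mul_le_mul_of_nonneg_left
          (setIntegral_diagGaussianWeight_ball_le (fun j ↦ sub_nonneg.2 (ha₁_le j)) z δ)
          (exp_pos _).le
    _ ≤ exp (-(a₁ / 2) * (‖z‖ - δ) ^ 2) *
          ∫ x in ball 0 δ, exp (a₁ / 2 * δ ^ 2) * diagGaussianWeight a x := by
        refine mul_le_mul_of_nonneg_left (setIntegral_mono_on
          (integrableOn_diagGaussianWeight_ball _ 0 δ)
          ((integrableOn_diagGaussianWeight_ball a 0 δ).const_mul _) measurableSet_ball fun x hx ↦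
          diagGaussianWeight_sub_le_of_norm_le a (ha_nonneg _) (mem_ball_zero_iff.1 hx).le)
          (exp_pos _).le
    _ = _ := by rw [integral_const_mul]; ring

/-- Small-ball ratio bound for a nondegenerate diagonal centered Gaussian on ℝⁿ:
the Gaussian mass ratio of balls (expressed via the Gaussian density, the
normalising constant cancelling) satisfies
μ₀(B(z,δ))/μ₀(B(0,δ)) ≤ exp((a₁/2)δ²)·exp(−(a₁/2)(‖z‖−δ)²) with a₁ = 1/λ₁. -/
theorem stmt0 (n : ℕ) (hn : 0 < n) (lam : Fin n → ℝ) (hpos : ∀ j, 0 < lam j)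
    (hmono : Antitone lam) (a : Fin n → ℝ) (ha : ∀ j, a j = (lam j)⁻¹)
    (δ : ℝ) (hδ : 0 < δ) (z : EuclideanSpace ℝ (Fin n)) :
    (∫ x in ball z δ, exp (-(1/2) * ∑ j, a j * (x j)^2)) /
      (∫ x in ball (0 : EuclideanSpace ℝ (Fin n)) δ, exp (-(1/2) * ∑ j, a j * (x j)^2))
    ≤ exp ((a ⟨0, hn⟩ / 2) * δ^2) * exp (-(a ⟨0, hn⟩ / 2) * (‖z‖ - δ)^2) :=
  stmt0_general n hn lam hpos hmono a ha δ z
end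

section
/- Let μ₀ be a Borel probability measure on a separable Banach space X, and let Φ : X → ℝ be locally Lipschitz: for every r > 0 there is L(r) > 0 such that |Φ(u) − Φ(v)| ≤ L(r)‖u − v‖ for all ‖u‖, ‖v‖ < r. Define Jδ(z) = ∫_{B(z,δ)} exp(−Φ(u)) dμ₀(u). Then for any z₁, z₂ ∈ X with μ₀(B(z₂,δ)) > 0 for all δ > 0, and any δ > 0, we have Jδ(z₁)/Jδ(z₂) ≤ exp(δ(L₁+L₂)) · exp(Φ(z₂) − Φ(z₁)) · μ₀(B(z₁,δ))/μ₀(B(z₂,δ)), where L₁ = L(‖z₁‖+δ) and L₂ = L(‖z₂‖+δ). -/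
/-!
On `B(z, δ)` the local Lipschitz bound pins `Φ` to within `L(‖z‖ + δ) δ` of `Φ z`, so
`exp(-Φ)` lies between `exp(-Φ z ∓ L(‖z‖ + δ) δ)` there. Integrating, `J_δ(z₁)` is at most
`exp(L₁ δ - Φ z₁) μ₀(B(z₁, δ))` and `J_δ(z₂)` at least `exp(-L₂ δ - Φ z₂) μ₀(B(z₂, δ))`;
dividing gives the bound.
-/

open MeasureTheory Metric Real

section

variable {E : Type*} [SeminormedAddCommGroup E] {Φ : E → ℝ}

theorem locallyLipschitz_of_forall_norm_lt {L : ℝ → ℝ}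
    (hLip : ∀ r > 0, ∀ u v : E, ‖u‖ < r → ‖v‖ < r → |Φ u - Φ v| ≤ L r * ‖u - v‖) :
    LocallyLipschitz Φ := by
  intro x
  have hr : 0 < ‖x‖ + 1 := by positivity
  refine ⟨(L (‖x‖ + 1)).toNNReal, ball 0 (‖x‖ + 1),
    isOpen_ball.mem_nhds (by simp), LipschitzOnWith.of_dist_le_mul fun u hu v hv => ?_⟩
  rw [mem_ball_zero_iff] at hu hv
  calc dist (Φ u) (Φ v) = |Φ u - Φ v| := dist_eq _ _
    _ ≤ L (‖x‖ + 1) * ‖u - v‖ := hLip _ hr u v hu hv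
    _ ≤ (L (‖x‖ + 1)).toNNReal * dist u v := by
      rw [dist_eq_norm]
      exact mul_le_mul_of_nonneg_right (le_coe_toNNReal _) (norm_nonneg _)

variable {K δ : ℝ} {z : E}

theorem abs_sub_le_mul_of_mem_ball (hK : 0 ≤ K)
    (hLip : ∀ u v : E, ‖u‖ < ‖z‖ + δ → ‖v‖ < ‖z‖ + δ → |Φ u - Φ v| ≤ K * ‖u - v‖)
    {u : E} (hu : u ∈ ball z δ) : |Φ u - Φ z| ≤ K * δ :=
  calc |Φ u - Φ z| ≤ K * ‖u - z‖ :=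
        hLip u z (norm_lt_of_mem_ball hu) (by linarith [pos_of_mem_ball hu])
    _ ≤ K * δ := mul_le_mul_of_nonneg_left (mem_ball_iff_norm.1 hu).le hK

theorem exp_neg_mem_Icc_of_mem_ball (hK : 0 ≤ K)
    (hLip : ∀ u v : E, ‖u‖ < ‖z‖ + δ → ‖v‖ < ‖z‖ + δ → |Φ u - Φ v| ≤ K * ‖u - v‖)
    {u : E} (hu : u ∈ ball z δ) :
    exp (-Φ u) ∈ Set.Icc (exp (-(K * δ) - Φ z)) (exp (K * δ - Φ z)) := by
  obtain ⟨hlow, hup⟩ := abs_le.1 (abs_sub_le_mul_of_mem_ball hK hLip hu)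
  exact ⟨exp_le_exp.2 (by linarith), exp_le_exp.2 (by linarith)⟩

variable [MeasurableSpace E] (μ : Measure E) [IsFiniteMeasure μ]

theorem setIntegral_exp_neg_ball_le (hK : 0 ≤ K)
    (hLip : ∀ u v : E, ‖u‖ < ‖z‖ + δ → ‖v‖ < ‖z‖ + δ → |Φ u - Φ v| ≤ K * ‖u - v‖) :
    ∫ u in ball z δ, exp (-Φ u) ∂μ ≤ exp (K * δ - Φ z) * μ.real (ball z δ) := by
  refine (le_norm_self _).trans <| norm_setIntegral_le_of_norm_le_const (measure_lt_top _ _)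
    fun u hu => ?_
  rw [norm_of_nonneg (exp_pos _).le]
  exact (exp_neg_mem_Icc_of_mem_ball hK hLip hu).2

theorem exp_mul_measureReal_ball_le_setIntegral [OpensMeasurableSpace E] (hΦ : Continuous Φ)
    (hK : 0 ≤ K)
    (hLip : ∀ u v : E, ‖u‖ < ‖z‖ + δ → ‖v‖ < ‖z‖ + δ → |Φ u - Φ v| ≤ K * ‖u - v‖) :
    exp (-(K * δ) - Φ z) * μ.real (ball z δ) ≤ ∫ u in ball z δ, exp (-Φ u) ∂μ := by
  have hint : IntegrableOn (fun u => exp (-Φ u)) (ball z δ) μ := by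
    refine .of_bound (measure_lt_top _ _) hΦ.neg.rexp.aestronglyMeasurable (exp (K * δ - Φ z)) ?_
    filter_upwards [ae_restrict_mem measurableSet_ball] with u hu
    rw [norm_of_nonneg (exp_pos _).le]
    exact (exp_neg_mem_Icc_of_mem_ball hK hLip hu).2
  exact setIntegral_ge_of_const_le_real measurableSet_ball (measure_ne_top _ _)
    (fun u hu => (exp_neg_mem_Icc_of_mem_ball hK hLip hu).1) hint

end

theorem stmt3_general {X : Type*} [NormedAddCommGroup X]
    [MeasurableSpace X] [BorelSpace X]
    (μ₀ : Measure X) [IsProbabilityMeasure μ₀]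
    (Φ : X → ℝ) (L : ℝ → ℝ)
    (hLpos : ∀ r > 0, 0 < L r)
    (hLip : ∀ r > 0, ∀ u v : X, ‖u‖ < r → ‖v‖ < r → |Φ u - Φ v| ≤ L r * ‖u - v‖)
    (z₁ z₂ : X) (δ : ℝ) (hδ : 0 < δ)
    (hpos : ∀ d > 0, 0 < μ₀ (ball z₂ d)) :
    (∫ u in ball z₁ δ, exp (-Φ u) ∂μ₀) / (∫ u in ball z₂ δ, exp (-Φ u) ∂μ₀)
      ≤ exp (δ * (L (‖z₁‖ + δ) + L (‖z₂‖ + δ))) * exp (Φ z₂ - Φ z₁) *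
        ((μ₀ (ball z₁ δ)).toReal / (μ₀ (ball z₂ δ)).toReal) := by
  have hr₁ : 0 < ‖z₁‖ + δ := by positivity
  have hr₂ : 0 < ‖z₂‖ + δ := by positivity
  have hI₁ := setIntegral_exp_neg_ball_le μ₀ (hLpos _ hr₁).le (hLip _ hr₁)
  have hI₂ := exp_mul_measureReal_ball_le_setIntegral μ₀
    (locallyLipschitz_of_forall_norm_lt hLip).continuous (hLpos _ hr₂).le (hLip _ hr₂)
  have hm₂ : 0 < μ₀.real (ball z₂ δ) :=
    ENNReal.toReal_pos (hpos δ hδ).ne' (measure_ne_top _ _)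
  rw [← measureReal_def, ← measureReal_def]
  calc _ ≤ exp (L (‖z₁‖ + δ) * δ - Φ z₁) * μ₀.real (ball z₁ δ) /
          (exp (-(L (‖z₂‖ + δ) * δ) - Φ z₂) * μ₀.real (ball z₂ δ)) :=
        div_le_div₀ (by positivity) hI₁ (by positivity) hI₂
    _ = _ := by
      rw [mul_div_mul_comm, ← exp_sub, ← exp_add]
      ring_nf

/-- Key bound of Theorem 3.2: for a probability measure μ₀ on a separable Banach
space and a locally Lipschitz potential Φ, with Jδ(z) = ∫_{B(z,δ)} exp(−Φ) dμ₀,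
Jδ(z₁)/Jδ(z₂) ≤ exp(δ(L₁+L₂)) exp(Φ(z₂)−Φ(z₁)) μ₀(B(z₁,δ))/μ₀(B(z₂,δ)),
where Lᵢ = L(‖zᵢ‖+δ). -/
theorem stmt3 {X : Type*} [NormedAddCommGroup X] [NormedSpace ℝ X]
    [TopologicalSpace.SeparableSpace X] [MeasurableSpace X] [BorelSpace X]
    (μ₀ : Measure X) [IsProbabilityMeasure μ₀]
    (Φ : X → ℝ) (L : ℝ → ℝ)
    (hLpos : ∀ r > 0, 0 < L r)
    (hLip : ∀ r > 0, ∀ u v : X, ‖u‖ < r → ‖v‖ < r → |Φ u - Φ v| ≤ L r * ‖u - v‖)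
    (z₁ z₂ : X) (δ : ℝ) (hδ : 0 < δ)
    (hpos : ∀ d > 0, 0 < μ₀ (ball z₂ d)) :
    (∫ u in ball z₁ δ, exp (-Φ u) ∂μ₀) / (∫ u in ball z₂ δ, exp (-Φ u) ∂μ₀)
      ≤ exp (δ * (L (‖z₁‖ + δ) + L (‖z₂‖ + δ))) * exp (Φ z₂ - Φ z₁) *
        ((μ₀ (ball z₁ δ)).toReal / (μ₀ (ball z₂ δ)).toReal) :=
  stmt3_general μ₀ Φ L hLpos hLip z₁ z₂ δ hδ hpos
end

section
/- Let μ₀ be a Borel probability measure on a separable Banach space X such that for z₁, z₂ ∈ X the limit lim_{δ→0} μ₀(B(z₁,δ))/μ₀(B(z₂,δ)) = exp(½‖z₂‖_E² − ½‖z₁‖_E²) holds, where ‖·‖_E is a given (extended-real-valued) functional finite at z₁, z₂. Let Φ : X → ℝ be locally Lipschitz. Define μ by dμ/dμ₀ ∝ exp(−Φ) and I(z) = Φ(z) + ½‖z‖_E². Then lim_{δ→0} μ(B(z₁,δ))/μ(B(z₂,δ)) = exp(I(z₂) − I(z₁)). -/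
open MeasureTheory Metric Real Filter
open scoped Topology ENNReal

/-! A locally Lipschitz `Φ` is continuous, so on `B(z, δ)` the density `exp (-Φ) / Z` is uniformly
close to its value at `z`, and `μ(B(z, δ)) = (exp (-Φ z) / Z + o(1)) · μ₀(B(z, δ))` as `δ → 0`.
Dividing these expansions at `z₁` and `z₂` reduces the claim to the small-ball ratio limit for `μ₀`,
whose positive limit also forces both balls to have positive `μ₀`-measure for small `δ`. -/

theorem continuous_of_abs_sub_le_mul_norm_sub {E : Type*} [SeminormedAddCommGroup E]
    {f : E → ℝ} (L : ℝ → ℝ)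
    (hf : ∀ r > 0, ∀ u v : E, ‖u‖ < r → ‖v‖ < r → |f u - f v| ≤ L r * ‖u - v‖) :
    Continuous f := by
  refine continuous_iff_continuousAt.2 fun z => ?_
  have hz : z ∈ ball (0 : E) (‖z‖ + 1) := by simp
  have hlip : LipschitzOnWith (L (‖z‖ + 1)).toNNReal f (ball 0 (‖z‖ + 1)) :=
    LipschitzOnWith.of_dist_le_mul fun u hu v hv => by
      simp only [mem_ball_zero_iff] at hu hv
      rw [Real.dist_eq, dist_eq_norm]
      exact (hf _ (by positivity) u v hu hv).trans
        (mul_le_mul_of_nonneg_right (le_coe_toNNReal _) (norm_nonneg _))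
  exact hlip.continuousOn.continuousAt (isOpen_ball.mem_nhds hz)

theorem toReal_withDensity_ofReal_mem_Icc {α : Type*} [MeasurableSpace α] {μ : Measure α}
    {g : α → ℝ} {s : Set α} {a b : ℝ} (hs : MeasurableSet s) (hμs : μ s ≠ ∞) (hb : 0 ≤ b)
    (hg : ∀ u ∈ s, g u ∈ Set.Icc a b) :
    (μ.withDensity (fun u => ENNReal.ofReal (g u)) s).toReal ∈
      Set.Icc (a * (μ s).toReal) (b * (μ s).toReal) := by
  rw [withDensity_apply _ hs]
  have hupper : ∫⁻ u in s, ENNReal.ofReal (g u) ∂μ ≤ ENNReal.ofReal b * μ s := by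
    rw [← setLIntegral_const]
    exact setLIntegral_mono measurable_const fun u hu => ENNReal.ofReal_le_ofReal (hg u hu).2
  have hlower : ENNReal.ofReal a * μ s ≤ ∫⁻ u in s, ENNReal.ofReal (g u) ∂μ := by
    rw [← setLIntegral_const]
    exact setLIntegral_mono' hs fun u hu => ENNReal.ofReal_le_ofReal (hg u hu).1
  have hfin : ENNReal.ofReal b * μ s ≠ ∞ := ENNReal.mul_ne_top ENNReal.ofReal_ne_top hμs
  constructor
  · calc a * (μ s).toReal ≤ (ENNReal.ofReal a * μ s).toReal := by
          rw [ENNReal.toReal_mul, ENNReal.toReal_ofReal']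
          exact mul_le_mul_of_nonneg_right (le_max_left _ _) ENNReal.toReal_nonneg
      _ ≤ _ := ENNReal.toReal_mono (ne_top_of_le_ne_top hfin hupper) hlower
  · calc _ ≤ (ENNReal.ofReal b * μ s).toReal := ENNReal.toReal_mono hfin hupper
      _ = b * (μ s).toReal := by rw [ENNReal.toReal_mul, ENNReal.toReal_ofReal hb]

theorem tendsto_toReal_withDensity_ball_div {X : Type*} [PseudoMetricSpace X]
    [MeasurableSpace X] [OpensMeasurableSpace X] (μ : Measure X) [IsFiniteMeasure μ]
    {g : X → ℝ} {z : X} (hg : ContinuousAt g z) (hgz : 0 ≤ g z)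
    (hpos : ∀ᶠ δ in 𝓝[>] (0 : ℝ), μ (ball z δ) ≠ 0) :
    Tendsto (fun δ : ℝ =>
        (μ.withDensity (fun u => ENNReal.ofReal (g u)) (ball z δ)).toReal / (μ (ball z δ)).toReal)
      (𝓝[>] 0) (𝓝 (g z)) := by
  refine Metric.tendsto_nhds.2 fun ε hε => ?_
  obtain ⟨η, hη, hgη⟩ := Metric.continuousAt_iff.1 hg (ε / 2) (half_pos hε)
  filter_upwards [hpos, eventually_nhdsWithin_of_eventually_nhds (eventually_lt_nhds hη)]
    with δ hμδ hδη
  have hball : ∀ u ∈ ball z δ, g u ∈ Set.Icc (g z - ε / 2) (g z + ε / 2) := fun u hu => by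
    have := hgη ((mem_ball.1 hu).trans hδη)
    rw [Real.dist_eq, abs_lt] at this
    constructor <;> linarith
  obtain ⟨hlow, hup⟩ := toReal_withDensity_ofReal_mem_Icc measurableSet_ball
    (measure_ne_top μ _) (by positivity) hball
  have ha : 0 < (μ (ball z δ)).toReal := ENNReal.toReal_pos hμδ (measure_ne_top μ _)
  rw [Real.dist_eq, abs_lt, lt_sub_iff_add_lt, sub_lt_iff_lt_add', lt_div_iff₀ ha, div_lt_iff₀ ha]
  constructor <;> nlinarith

theorem stmt4_general {X : Type*} [NormedAddCommGroup X]
    [MeasurableSpace X] [BorelSpace X]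
    (μ₀ : Measure X) [IsProbabilityMeasure μ₀]
    (nE : X → ℝ≥0∞) (Φ : X → ℝ) (L : ℝ → ℝ)
    (hLip : ∀ r > 0, ∀ u v : X, ‖u‖ < r → ‖v‖ < r → |Φ u - Φ v| ≤ L r * ‖u - v‖)
    (z₁ z₂ : X)
    (Z : ℝ) (hZpos : 0 < Z)
    (μ : Measure X)
    (hμ : μ = μ₀.withDensity (fun u => ENNReal.ofReal (exp (-Φ u) / Z)))
    (hsmall : Tendsto
      (fun δ : ℝ => (μ₀ (ball z₁ δ)).toReal / (μ₀ (ball z₂ δ)).toReal)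
      (𝓝[>] 0)
      (𝓝 (exp ((nE z₂).toReal ^ 2 / 2 - (nE z₁).toReal ^ 2 / 2)))) :
    Tendsto (fun δ : ℝ => (μ (ball z₁ δ)).toReal / (μ (ball z₂ δ)).toReal)
      (𝓝[>] 0)
      (𝓝 (exp ((Φ z₂ + (nE z₂).toReal ^ 2 / 2) - (Φ z₁ + (nE z₁).toReal ^ 2 / 2)))) := by
  subst hμ
  have hΦ := continuous_of_abs_sub_le_mul_norm_sub L hLip
  have hdensity : Continuous fun u => exp (-Φ u) / Z := by fun_prop
  have hballs : ∀ᶠ δ in 𝓝[>] (0 : ℝ),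
      (μ₀ (ball z₁ δ)).toReal ≠ 0 ∧ (μ₀ (ball z₂ δ)).toReal ≠ 0 := by
    filter_upwards [hsmall.eventually (eventually_gt_nhds (exp_pos _))] with δ hδ
    exact ⟨fun h => by simp [h] at hδ, fun h => by simp [h] at hδ⟩
  have hdensity_at (z : X) (hz : ∀ᶠ δ in 𝓝[>] (0 : ℝ), (μ₀ (ball z δ)).toReal ≠ 0) :=
    tendsto_toReal_withDensity_ball_div μ₀ hdensity.continuousAt
      (by positivity : 0 ≤ exp (-Φ z) / Z) (hz.mono fun _ h h0 => h (by simp [h0]))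
  have hlim := ((hdensity_at z₁ (hballs.mono fun _ h => h.1)).mul hsmall).div
    (hdensity_at z₂ (hballs.mono fun _ h => h.2)) (by positivity)
  convert hlim.congr' ?_ using 2
  · rw [exp_sub, exp_sub, exp_add, exp_add, exp_neg, exp_neg]
    field_simp
  · filter_upwards [hballs] with δ ⟨h₁, h₂⟩
    simp only [Pi.div_apply]
    field_simp

/-- Theorem 3.2 (Onsager–Machlup functional), abstract form: assume the Gaussian
small-ball ratio limit for μ₀ at z₁, z₂ (with extended-real "Cameron–Martin norm"
functional nE, finite at z₁, z₂), Φ locally Lipschitz, and μ defined by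
dμ/dμ₀ = exp(−Φ)/Z. Then μ(B(z₁,δ))/μ(B(z₂,δ)) → exp(I(z₂) − I(z₁)) as δ → 0⁺,
where I(z) = Φ(z) + ½‖z‖_E². -/
theorem stmt4 {X : Type*} [NormedAddCommGroup X] [NormedSpace ℝ X]
    [TopologicalSpace.SeparableSpace X] [MeasurableSpace X] [BorelSpace X]
    (μ₀ : Measure X) [IsProbabilityMeasure μ₀]
    (nE : X → ℝ≥0∞) (Φ : X → ℝ) (L : ℝ → ℝ)
    (hLip : ∀ r > 0, ∀ u v : X, ‖u‖ < r → ‖v‖ < r → |Φ u - Φ v| ≤ L r * ‖u - v‖)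
    (z₁ z₂ : X) (h₁ : nE z₁ ≠ ∞) (h₂ : nE z₂ ≠ ∞)
    (Z : ℝ) (hZdef : Z = ∫ u, exp (-Φ u) ∂μ₀) (hZpos : 0 < Z)
    (μ : Measure X)
    (hμ : μ = μ₀.withDensity (fun u => ENNReal.ofReal (exp (-Φ u) / Z)))
    (hsmall : Tendsto
      (fun δ : ℝ => (μ₀ (ball z₁ δ)).toReal / (μ₀ (ball z₂ δ)).toReal)
      (𝓝[>] 0)
      (𝓝 (exp ((nE z₂).toReal ^ 2 / 2 - (nE z₁).toReal ^ 2 / 2)))) :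
    Tendsto (fun δ : ℝ => (μ (ball z₁ δ)).toReal / (μ (ball z₂ δ)).toReal)
      (𝓝[>] 0)
      (𝓝 (exp ((Φ z₂ + (nE z₂).toReal ^ 2 / 2) - (Φ z₁ + (nE z₁).toReal ^ 2 / 2)))) :=
  stmt4_general μ₀ nE Φ L hLip z₁ z₂ Z hZpos μ hμ hsmall
end

section
/- Fix u† in a Hilbert space E, a map 𝒢 : X → ℝᴷ on a Banach space X ⊇ E, and i.i.d. centered ℝᴷ-valued random vectors η₁,…,ηₙ with E|C₁^{-1/2}η₁|² = K < ∞. For each n, let uₙ minimize Iₙ(u) = ‖u‖_E² + Σ_{j=1}^{n} |yⱼ − 𝒢(u)|²_{C₁} over E, where yⱼ = 𝒢(u†) + ηⱼ. Then E|𝒢(u†) − 𝒢(uₙ)|²_{C₁} ≤ (2/n)(‖u†‖_E² + 2K) and E‖uₙ‖_E² ≤ ‖u†‖_E² + 2K; in particular E|𝒢(u†) − 𝒢(uₙ)|²_{C₁} → 0 as n → ∞. -/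
/-!
Compare `Iₙ(uₙ)` with `Iₙ(u†)`. Writing `b = C₁^{-1/2}(𝒢(u†) - 𝒢(uₙ))` and
`A = ∑ⱼ C₁^{-1/2}ηⱼ` and expanding the squares, minimality gives
`‖uₙ‖² + 2⟪A, b⟫ + n|b|² ≤ ‖u†‖²`. Young's inequality `2|⟪A, b⟫| ≤ (2/n)|A|² + (n/2)|b|²`
absorbs the cross term into half of `n|b|²`, and independence and centring give
`E|A|² = nK`. Taking expectations, `E‖uₙ‖² + (n/2) E|b|² ≤ ‖u†‖² + 2K`.
-/

open MeasureTheory Filter Metric ProbabilityTheory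
open scoped Topology

open Finset
open scoped RealInnerProductSpace

section Deterministic

variable {ι F : Type*} [NormedAddCommGroup F] [InnerProductSpace ℝ F]

lemma sum_norm_add_sq (s : Finset ι) (a : ι → F) (b : F) :
    ∑ j ∈ s, ‖a j + b‖ ^ 2 = ∑ j ∈ s, ‖a j‖ ^ 2 + 2 * ⟪∑ j ∈ s, a j, b⟫ + #s * ‖b‖ ^ 2 := by
  simp only [norm_add_sq_real, sum_add_distrib, sum_const, nsmul_eq_mul, ← mul_sum, sum_inner]

lemma add_card_div_two_mul_norm_sq_le {s : Finset ι} (hs : s.Nonempty) {a : ι → F} {b : F}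
    {x y : ℝ} (h : x + ∑ j ∈ s, ‖a j + b‖ ^ 2 ≤ y + ∑ j ∈ s, ‖a j‖ ^ 2) :
    x + #s / 2 * ‖b‖ ^ 2 ≤ y + 2 / #s * ‖∑ j ∈ s, a j‖ ^ 2 := by
  set A := ∑ j ∈ s, a j
  have hn : (0 : ℝ) < #s := by exact_mod_cast hs.card_pos
  have hcs : -(‖A‖ * ‖b‖) ≤ ⟪A, b⟫ := (abs_le.mp (abs_real_inner_le_norm A b)).1
  have hyoung : 2 * (‖A‖ * ‖b‖) ≤ 2 / #s * ‖A‖ ^ 2 + #s / 2 * ‖b‖ ^ 2 := by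
    rw [div_mul_eq_mul_div, div_mul_eq_mul_div, div_add_div _ _ hn.ne' two_ne_zero,
      le_div_iff₀ (by positivity)]
    nlinarith [sq_nonneg (#s * ‖b‖ - 2 * ‖A‖)]
  rw [sum_norm_add_sq] at h
  linarith

end Deterministic

section Independent

variable {Ω ι F : Type*} [MeasurableSpace Ω] {μ : Measure Ω}
  [NormedAddCommGroup F] [InnerProductSpace ℝ F] [CompleteSpace F]
  [MeasurableSpace F] [BorelSpace F]

lemma integral_inner_eq_zero_of_indepFun {X Y : Ω → F} (hXY : IndepFun X Y μ)
    (hX : Integrable X μ) (hY : Integrable Y μ) (hX0 : ∫ ω, X ω ∂μ = 0) :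
    ∫ ω, ⟪X ω, Y ω⟫ ∂μ = 0 := by
  have := hXY.integral_bilin hX hY (innerSL ℝ)
  rwa [hX0, map_zero, zero_apply] at this

lemma integral_norm_sum_sq_of_pairwise_indepFun [IsFiniteMeasure μ] {ξ : ι → Ω → F}
    (hindep : Pairwise fun i j => IndepFun (ξ i) (ξ j) μ) (hξ : ∀ i, MemLp (ξ i) 2 μ)
    (hcent : ∀ i, ∫ ω, ξ i ω ∂μ = 0) (s : Finset ι) :
    ∫ ω, ‖∑ i ∈ s, ξ i ω‖ ^ 2 ∂μ = ∑ i ∈ s, ∫ ω, ‖ξ i ω‖ ^ 2 ∂μ := by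
  have hint : ∀ i, Integrable (ξ i) μ := fun i => (hξ i).integrable one_le_two
  have hsq : ∀ i, Integrable (fun ω => ‖ξ i ω‖ ^ 2) μ := fun i => (hξ i).integrable_norm_pow'
  have hinner : ∀ i j, Integrable (fun ω => ⟪ξ i ω, ξ j ω⟫) μ := by
    intro i j
    rcases eq_or_ne i j with rfl | hij
    · simpa only [real_inner_self_eq_norm_sq] using hsq i
    · exact (hindep hij).integrable_bilin (hint i) (hint j) (innerSL ℝ)
  have hexpand : ∀ ω, ‖∑ i ∈ s, ξ i ω‖ ^ 2 = ∑ i ∈ s, ∑ j ∈ s, ⟪ξ i ω, ξ j ω⟫ := by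
    intro ω
    rw [← real_inner_self_eq_norm_sq, sum_inner]
    simp only [inner_sum]
  simp_rw [hexpand]
  rw [integral_finsetSum _ fun i _ => integrable_finsetSum _ fun j _ => hinner i j]
  refine sum_congr rfl fun i hi => ?_
  rw [integral_finsetSum _ fun j _ => hinner i j, sum_eq_single_of_mem i hi fun j _ hji =>
    integral_inner_eq_zero_of_indepFun (hindep hji.symm) (hint i) (hint j) (hcent i)]
  simp only [real_inner_self_eq_norm_sq]

lemma integral_add_card_div_two_mul_integral_le [IsProbabilityMeasure μ] {ξ : ι → Ω → F}
    (hindep : Pairwise fun i j => IndepFun (ξ i) (ξ j) μ) (hξ : ∀ i, MemLp (ξ i) 2 μ)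
    (hcent : ∀ i, ∫ ω, ξ i ω ∂μ = 0) {Kc : ℝ} (hKc : ∀ i, ∫ ω, ‖ξ i ω‖ ^ 2 ∂μ = Kc)
    {s : Finset ι} (hs : s.Nonempty) {x : Ω → ℝ} {b : Ω → F} {y : ℝ}
    (hx : Integrable x μ) (hb : Integrable (fun ω => ‖b ω‖ ^ 2) μ)
    (h : ∀ ω, x ω + ∑ j ∈ s, ‖ξ j ω + b ω‖ ^ 2 ≤ y + ∑ j ∈ s, ‖ξ j ω‖ ^ 2) :
    ∫ ω, x ω ∂μ + #s / 2 * ∫ ω, ‖b ω‖ ^ 2 ∂μ ≤ y + 2 * Kc := by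
  have hn : (0 : ℝ) < #s := by exact_mod_cast hs.card_pos
  have hsum : Integrable (fun ω => ‖∑ j ∈ s, ξ j ω‖ ^ 2) μ :=
    (memLp_finsetSum _ fun j _ => hξ j).integrable_norm_pow'
  calc ∫ ω, x ω ∂μ + #s / 2 * ∫ ω, ‖b ω‖ ^ 2 ∂μ
      = ∫ ω, (x ω + #s / 2 * ‖b ω‖ ^ 2) ∂μ := by
        rw [integral_add hx (hb.const_mul _), integral_const_mul]
    _ ≤ ∫ ω, (y + 2 / #s * ‖∑ j ∈ s, ξ j ω‖ ^ 2) ∂μ :=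
        integral_mono (hx.add (hb.const_mul _)) ((integrable_const _).add (hsum.const_mul _))
          fun ω => add_card_div_two_mul_norm_sq_le hs (h ω)
    _ = y + 2 * Kc := by
        rw [integral_add (integrable_const _) (hsum.const_mul _), integral_const_mul,
          integral_norm_sum_sq_of_pairwise_indepFun hindep hξ hcent, integral_const,
          probReal_univ, one_smul]
        simp only [hKc, sum_const, nsmul_eq_mul]
        field_simp

end Independent

lemma le_two_div_mul_and_le_of_add_div_two_mul_le {x y c n : ℝ} (hn : 0 < n) (hx : 0 ≤ x)
    (hy : 0 ≤ y) (h : x + n / 2 * y ≤ c) : y ≤ 2 / n * c ∧ x ≤ c := by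
  refine ⟨?_, by nlinarith⟩
  rw [div_mul_eq_mul_div, le_div_iff₀ hn]
  linarith

lemma tendsto_zero_of_nonneg_of_le_const_div {y : ℕ → ℝ} {c : ℝ} (hy0 : ∀ n, 0 ≤ y n)
    (hy : ∀ n, 1 ≤ n → y n ≤ c / n) : Tendsto y atTop (𝓝 0) :=
  squeeze_zero' (Eventually.of_forall hy0) ((eventually_ge_atTop 1).mono hy)
    (tendsto_const_div_atTop_nhds_zero_nat c)

theorem stmt10_general {E X : Type*} [NormedAddCommGroup E] [InnerProductSpace ℝ E]
    [NormedAddCommGroup X] [NormedSpace ℝ X]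
    (ι : E →L[ℝ] X)
    {K : ℕ} (G : X → EuclideanSpace ℝ (Fin K))
    (S : EuclideanSpace ℝ (Fin K) →L[ℝ] EuclideanSpace ℝ (Fin K))
    (hS : Function.Bijective S)
    {Ω : Type*} [MeasurableSpace Ω] (P : Measure Ω) [IsProbabilityMeasure P]
    (η : ℕ → Ω → EuclideanSpace ℝ (Fin K))
    (hηmeas : ∀ j, Measurable (η j))
    (hindep : iIndepFun η P)
    (hcent : ∀ j, (∫ ω, η j ω ∂P) = 0)
    (Kc : ℝ)
    (hKint : ∀ j, Integrable (fun ω => ‖S (η j ω)‖^2) P)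
    (hKc : ∀ j, (∫ ω, ‖S (η j ω)‖^2 ∂P) = Kc)
    (udag : E) (u : ℕ → Ω → E)
    (hmin : ∀ n ω, ∀ w : E,
      ‖u n ω‖^2 + ∑ j ∈ Finset.range n, ‖S (G (ι udag) + η j ω - G (ι (u n ω)))‖^2
        ≤ ‖w‖^2 + ∑ j ∈ Finset.range n, ‖S (G (ι udag) + η j ω - G (ι w))‖^2)
    (hGint : ∀ n, Integrable (fun ω => ‖S (G (ι udag) - G (ι (u n ω)))‖^2) P)
    (huint : ∀ n, Integrable (fun ω => ‖u n ω‖^2) P) :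
    (∀ n : ℕ, 1 ≤ n →
      (∫ ω, ‖S (G (ι udag) - G (ι (u n ω)))‖^2 ∂P) ≤ (2 / n) * (‖udag‖^2 + 2 * Kc) ∧
      (∫ ω, ‖u n ω‖^2 ∂P) ≤ ‖udag‖^2 + 2 * Kc) ∧
    Tendsto (fun n => ∫ ω, ‖S (G (ι udag) - G (ι (u n ω)))‖^2 ∂P) atTop (𝓝 0) := by
  set ξ : ℕ → Ω → EuclideanSpace ℝ (Fin K) := fun j ω => S (η j ω)
  set b : ℕ → Ω → EuclideanSpace ℝ (Fin K) := fun n ω => S (G (ι udag) - G (ι (u n ω)))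
  have hξ : ∀ j, MemLp (ξ j) 2 P := fun j => (memLp_two_iff_integrable_sq_norm
    (S.continuous.measurable.comp (hηmeas j)).aestronglyMeasurable).2 (hKint j)
  -- `S` is invertible, so it commutes with the integral even without knowing `η j` integrable.
  have hξcent : ∀ j, ∫ ω, ξ j ω ∂P = 0 := fun j => by
    rw [← map_zero S, ← hcent j]
    exact (LinearEquiv.ofBijective S.toLinearMap hS).toContinuousLinearEquiv.integral_comp_comm _
  have hξindep : Pairwise fun i j => IndepFun (ξ i) (ξ j) P := fun i j hij =>
    (hindep.comp _ fun _ => S.continuous.measurable).indepFun hij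
  have henergy : ∀ n, 1 ≤ n →
      ∫ ω, ‖u n ω‖ ^ 2 ∂P + n / 2 * ∫ ω, ‖b n ω‖ ^ 2 ∂P ≤ ‖udag‖ ^ 2 + 2 * Kc := by
    intro n hn
    have hsplit : ∀ ω j, S (G (ι udag) + η j ω - G (ι (u n ω))) = ξ j ω + b n ω := fun ω j => by
      simp only [ξ, b, ← map_add]
      congr 1
      abel
    simpa only [card_range] using integral_add_card_div_two_mul_integral_le hξindep hξ hξcent hKc
      ⟨0, mem_range.2 hn⟩ (huint n) (hGint n)
      fun ω => by simpa only [hsplit, add_sub_cancel_left] using hmin n ω udag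
  have hbounds : ∀ n : ℕ, 1 ≤ n → ∫ ω, ‖b n ω‖ ^ 2 ∂P ≤ 2 / n * (‖udag‖ ^ 2 + 2 * Kc) ∧
      ∫ ω, ‖u n ω‖ ^ 2 ∂P ≤ ‖udag‖ ^ 2 + 2 * Kc :=
      fun n hn => le_two_div_mul_and_le_of_add_div_two_mul_le (by exact_mod_cast hn)
        (integral_nonneg fun ω => sq_nonneg _) (integral_nonneg fun ω => sq_nonneg _)
        (henergy n hn)
  exact ⟨hbounds, tendsto_zero_of_nonneg_of_le_const_div
    (fun n => integral_nonneg fun ω => sq_nonneg _)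
    fun n hn => (hbounds n hn).1.trans_eq (div_mul_eq_mul_div _ _ _)⟩

/-- Core estimates in Theorem 4.1 (large sample size limit): with u† ∈ E,
yⱼ = 𝒢(u†) + ηⱼ for i.i.d. centered noise with E|C₁^{-1/2}η|² = K (the weighted
norm |v|_{C₁} being realised as ‖S v‖ with S = C₁^{-1/2}), and uₙ minimising
Iₙ(u) = ‖u‖_E² + Σ_{j<n} |yⱼ − 𝒢(u)|²_{C₁} over E, one has
E|𝒢(u†) − 𝒢(uₙ)|²_{C₁} ≤ (2/n)(‖u†‖² + 2K), E‖uₙ‖² ≤ ‖u†‖² + 2K, and the first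
expectation tends to 0. -/
theorem stmt10 {E X : Type*} [NormedAddCommGroup E] [InnerProductSpace ℝ E]
    [CompleteSpace E] [TopologicalSpace.SeparableSpace E]
    [NormedAddCommGroup X] [NormedSpace ℝ X]
    (ι : E →L[ℝ] X) (hinj : Function.Injective ι)
    {K : ℕ} (G : X → EuclideanSpace ℝ (Fin K))
    (S : EuclideanSpace ℝ (Fin K) →L[ℝ] EuclideanSpace ℝ (Fin K))
    (hS : Function.Bijective S)
    {Ω : Type*} [MeasurableSpace Ω] (P : Measure Ω) [IsProbabilityMeasure P]
    (η : ℕ → Ω → EuclideanSpace ℝ (Fin K))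
    (hηmeas : ∀ j, Measurable (η j))
    (hindep : iIndepFun η P)
    (hident : ∀ j, P.map (η j) = P.map (η 0))
    (hcent : ∀ j, (∫ ω, η j ω ∂P) = 0)
    (Kc : ℝ)
    (hKint : ∀ j, Integrable (fun ω => ‖S (η j ω)‖^2) P)
    (hKc : ∀ j, (∫ ω, ‖S (η j ω)‖^2 ∂P) = Kc)
    (udag : E) (u : ℕ → Ω → E)
    (hmin : ∀ n ω, ∀ w : E,
      ‖u n ω‖^2 + ∑ j ∈ Finset.range n, ‖S (G (ι udag) + η j ω - G (ι (u n ω)))‖^2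
        ≤ ‖w‖^2 + ∑ j ∈ Finset.range n, ‖S (G (ι udag) + η j ω - G (ι w))‖^2)
    (hGint : ∀ n, Integrable (fun ω => ‖S (G (ι udag) - G (ι (u n ω)))‖^2) P)
    (huint : ∀ n, Integrable (fun ω => ‖u n ω‖^2) P) :
    (∀ n : ℕ, 1 ≤ n →
      (∫ ω, ‖S (G (ι udag) - G (ι (u n ω)))‖^2 ∂P) ≤ (2 / n) * (‖udag‖^2 + 2 * Kc) ∧
      (∫ ω, ‖u n ω‖^2 ∂P) ≤ ‖udag‖^2 + 2 * Kc) ∧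
    Tendsto (fun n => ∫ ω, ‖S (G (ι udag) - G (ι (u n ω)))‖^2 ∂P) atTop (𝓝 0) :=
  stmt10_general ι G S hS P η hηmeas hindep hcent Kc hKint hKc udag u hmin hGint huint
end

section
/- Let E' = {v ∈ H¹([0,T];ℝ) : v(0) = u⁻} and let Ψ : ℝ → ℝ be continuous and bounded below, F : ℝ → ℝ continuous and bounded above. Then the Onsager–Machlup functional I₁(u) = ∫₀ᵀ Ψ(u(t))dt − σ⁻²F(u(T)) + (1/(2σ²))∫₀ᵀ |u'(t)|² dt attains its infimum over E'. -/
/-!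
Direct method in the calculus of variations, with paths parametrised by their derivative
`f ∈ L²(0,T)`. Since `u(t) = u⁻ + ⟪𝟙_(0,t], f⟫`, a bounded weakly convergent sequence of
derivatives gives uniformly bounded, pointwise convergent paths, so the potential part
`∫ Ψ(u) - σ⁻² F(u(T))` converges by dominated convergence; it is also bounded below, which makes
minimising sequences bounded. Sequential Banach–Alaoglu extracts a weakly convergent
subsequence, and weak lower semicontinuity of `‖f‖²` shows that its limit is a minimiser.
-/

open MeasureTheory Real Set Filter Topology
open scoped RealInnerProductSpace ENNReal

section Hilbert

variable {H : Type*} [NormedAddCommGroup H] [InnerProductSpace ℝ H]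

theorem exists_subseq_tendsto_inner [CompleteSpace H] [TopologicalSpace.SeparableSpace H]
    {h : ℕ → H} {C : ℝ} (hC : ∀ n, ‖h n‖ ≤ C) :
    ∃ (g : H) (φ : ℕ → ℕ), StrictMono φ ∧
      ∀ y, Tendsto (fun k => ⟪h (φ k), y⟫) atTop (𝓝 ⟪g, y⟫) := by
  let x : ℕ → WeakDual ℝ H := fun n => InnerProductSpace.toDual ℝ H (h n)
  have hx : ∀ n, x n ∈ WeakDual.toStrongDual ⁻¹' Metric.closedBall 0 C := fun n =>
    mem_closedBall_zero_iff.mpr (((InnerProductSpace.toDual ℝ H).norm_map (h n)).trans_le (hC n))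
  obtain ⟨a, -, φ, hφ, ha⟩ := WeakDual.isSeqCompact_closedBall ℝ H 0 C hx
  refine ⟨(InnerProductSpace.toDual ℝ H).symm (WeakDual.toStrongDual a), φ, hφ, fun y => ?_⟩
  rw [InnerProductSpace.toDual_symm_apply]
  exact ((WeakDual.eval_continuous y).tendsto a).comp ha

theorem sq_norm_le_of_tendsto_inner {h : ℕ → H} {g : H} {r : ℝ}
    (h_weak : Tendsto (fun k => ⟪h k, g⟫) atTop (𝓝 ⟪g, g⟫))
    (h_norm : Tendsto (fun k => ‖h k‖ ^ 2) atTop (𝓝 r)) : ‖g‖ ^ 2 ≤ r := by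
  have hle : ∀ k, 2 * ⟪h k, g⟫ ≤ ‖h k‖ ^ 2 + ‖g‖ ^ 2 := fun k => by
    nlinarith [norm_sub_sq_real (h k) g, sq_nonneg ‖h k - g‖]
  have := le_of_tendsto_of_tendsto' (h_weak.const_mul 2) (h_norm.add_const _) hle
  rw [real_inner_self_eq_norm_sq] at this
  linarith

theorem exists_forall_add_mul_sq_norm_le [CompleteSpace H] [TopologicalSpace.SeparableSpace H]
    {A : H → ℝ} {c : ℝ} (hc : 0 < c) (hA : BddBelow (range A))
    (hA_weak : ∀ (h : ℕ → H) (g : H) (C : ℝ), (∀ n, ‖h n‖ ≤ C) →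
      (∀ y, Tendsto (fun k => ⟪h k, y⟫) atTop (𝓝 ⟪g, y⟫)) →
      Tendsto (fun k => A (h k)) atTop (𝓝 (A g))) :
    ∃ g, ∀ f, A g + c * ‖g‖ ^ 2 ≤ A f + c * ‖f‖ ^ 2 := by
  set J : H → ℝ := fun f => A f + c * ‖f‖ ^ 2 with hJ
  obtain ⟨B, hB⟩ := hA
  have hAB : ∀ f, B ≤ A f := fun f => hB ⟨f, rfl⟩
  have hJB : ∀ f, c * ‖f‖ ^ 2 ≤ J f - B := fun f => by linarith [hAB f]
  have hJ_bdd : BddBelow (range J) := ⟨B, by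
    rintro _ ⟨f, rfl⟩
    linarith [hJB f, mul_nonneg hc.le (sq_nonneg ‖f‖)]⟩
  obtain ⟨u, hu_anti, hu_lim, hu_mem⟩ := exists_seq_tendsto_sInf (range_nonempty J) hJ_bdd
  choose h hh using hu_mem
  have h_bdd : ∀ n, ‖h n‖ ≤ √((u 0 - B) / c) := fun n => by
    refine (abs_norm _).symm.trans_le (Real.abs_le_sqrt ?_)
    rw [le_div_iff₀ hc, mul_comm]
    linarith [hJB (h n), hh n, hu_anti (Nat.zero_le n)]
  obtain ⟨g, φ, hφ, h_weak⟩ := exists_subseq_tendsto_inner h_bdd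
  have hA_lim := hA_weak (h ∘ φ) g _ (fun k => h_bdd (φ k)) h_weak
  have hJ_lim : Tendsto (fun k => J (h (φ k))) atTop (𝓝 (sInf (range J))) := by
    simp only [hh]
    exact hu_lim.comp hφ.tendsto_atTop
  have h_norm_lim : Tendsto (fun k => ‖h (φ k)‖ ^ 2) atTop
      (𝓝 ((sInf (range J) - A g) / c)) :=
    ((hJ_lim.sub hA_lim).div_const c).congr fun k => by
      simp only [hJ, Function.comp_apply]
      field_simp
      ring
  have hg := sq_norm_le_of_tendsto_inner (h_weak g) h_norm_lim
  rw [le_div_iff₀ hc] at hg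
  refine ⟨g, fun f => ?_⟩
  change J g ≤ J f
  have hg_min : J g ≤ sInf (range J) := by simp only [hJ]; linarith
  exact hg_min.trans (csInf_le hJ_bdd ⟨f, rfl⟩)

end Hilbert

namespace OnsagerMachlup

abbrev L2Icc (T : ℝ) : Type := Lp ℝ 2 (volume.restrict (Icc (0 : ℝ) T))

noncomputable def path (u₀ : ℝ) (f : ℝ → ℝ) (t : ℝ) : ℝ := u₀ + ∫ s in (0 : ℝ)..t, f s

noncomputable def potential (T σ u₀ : ℝ) (Ψ F : ℝ → ℝ) (f : ℝ → ℝ) : ℝ :=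
  (∫ t in (0 : ℝ)..T, Ψ (path u₀ f t)) - 1 / σ ^ 2 * F (path u₀ f T)

variable {T t u₀ : ℝ}

theorem Ioc_subset_Icc_of_mem (ht : t ∈ Icc 0 T) : Ioc 0 t ⊆ Icc 0 T :=
  Ioc_subset_Icc_self.trans (Icc_subset_Icc_right ht.2)

noncomputable def indicatorIoc (T t : ℝ) : L2Icc T :=
  indicatorConstLp 2 measurableSet_Ioc (measure_ne_top _ (Ioc 0 t)) 1

theorem inner_indicatorIoc (ht : t ∈ Icc 0 T) (f : L2Icc T) :
    ⟪indicatorIoc T t, f⟫ = ∫ s in (0 : ℝ)..t, f s := by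
  rw [indicatorIoc, L2.inner_indicatorConstLp_one, intervalIntegral.integral_of_le ht.1,
    Measure.restrict_restrict measurableSet_Ioc, inter_eq_left.mpr (Ioc_subset_Icc_of_mem ht)]

theorem norm_indicatorIoc_le (ht : t ∈ Icc 0 T) : ‖indicatorIoc T t‖ ≤ √T := by
  refine norm_indicatorConstLp_le.trans ?_
  rw [norm_one, one_mul, Real.sqrt_eq_rpow]
  refine Real.rpow_le_rpow measureReal_nonneg ?_ (by norm_num)
  rw [measureReal_restrict_apply measurableSet_Ioc, inter_eq_left.mpr (Ioc_subset_Icc_of_mem ht)]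
  simpa [ht.1] using ht.2

theorem abs_path_le (ht : t ∈ Icc 0 T) (f : L2Icc T) : |path u₀ f t| ≤ |u₀| + √T * ‖f‖ := by
  rw [path, ← inner_indicatorIoc ht]
  refine (abs_add_le _ _).trans (add_le_add_right ?_ _)
  exact (abs_real_inner_le_norm _ _).trans
    (mul_le_mul_of_nonneg_right (norm_indicatorIoc_le ht) (norm_nonneg f))

theorem tendsto_path {h : ℕ → L2Icc T} {g : L2Icc T}
    (h_weak : ∀ y, Tendsto (fun k => ⟪h k, y⟫) atTop (𝓝 ⟪g, y⟫)) (ht : t ∈ Icc 0 T) :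
    Tendsto (fun k => path u₀ (h k) t) atTop (𝓝 (path u₀ g t)) := by
  simp only [path, ← inner_indicatorIoc ht, real_inner_comm _ (indicatorIoc T t)]
  exact (h_weak _).const_add u₀

theorem continuousOn_path (hT : 0 ≤ T) (f : L2Icc T) : ContinuousOn (path u₀ f) (Icc 0 T) := by
  have hf : IntegrableOn f (uIcc 0 T) := by
    rw [uIcc_of_le hT]
    exact (Lp.memLp f).integrable one_le_two
  have h_prim := intervalIntegral.continuousOn_primitive_interval hf
  rw [uIcc_of_le hT] at h_prim
  exact continuousOn_const.add h_prim

variable {σ M N C : ℝ} {Ψ F : ℝ → ℝ}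

theorem bddBelow_range_potential (hT : 0 ≤ T) (hΨc : Continuous Ψ) (hM : ∀ x, M ≤ Ψ x)
    (hN : ∀ x, F x ≤ N) : BddBelow (range fun f : L2Icc T => potential T σ u₀ Ψ F f) := by
  refine ⟨M * T - 1 / σ ^ 2 * N, ?_⟩
  rintro _ ⟨f, rfl⟩
  have hΨ_int : M * T ≤ ∫ t in (0 : ℝ)..T, Ψ (path u₀ f t) := by
    simpa [mul_comm] using intervalIntegral.integral_mono_on hT
      (intervalIntegrable_const (μ := volume))
      ((hΨc.comp_continuousOn (continuousOn_path hT f)).intervalIntegrable_of_Icc hT)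
      (fun t _ => hM _)
  have hF_le : 1 / σ ^ 2 * F (path u₀ f T) ≤ 1 / σ ^ 2 * N := by
    gcongr
    exact hN _
  simp only [potential]
  linarith

theorem tendsto_potential (hT : 0 ≤ T) (hΨc : Continuous Ψ) (hFc : Continuous F)
    {h : ℕ → L2Icc T} {g : L2Icc T} (hC : ∀ n, ‖h n‖ ≤ C)
    (h_weak : ∀ y, Tendsto (fun k => ⟪h k, y⟫) atTop (𝓝 ⟪g, y⟫)) :
    Tendsto (fun k => potential T σ u₀ Ψ F (h k)) atTop (𝓝 (potential T σ u₀ Ψ F g)) := by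
  have hIoc : uIoc 0 T ⊆ Icc 0 T := by
    rw [uIoc_of_le hT]
    exact Ioc_subset_Icc_self
  obtain ⟨K, hK⟩ := isCompact_Icc.exists_bound_of_continuousOn
    (s := Icc (-(|u₀| + √T * C)) (|u₀| + √T * C)) hΨc.continuousOn
  have h_int : Tendsto (fun k => ∫ t in (0 : ℝ)..T, Ψ (path u₀ (h k) t)) atTop
      (𝓝 (∫ t in (0 : ℝ)..T, Ψ (path u₀ g t))) := by
    refine intervalIntegral.tendsto_integral_filter_of_dominated_convergence (fun _ => K)
      (.of_forall fun k => ?_) (.of_forall fun k => .of_forall fun t ht => ?_)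
      intervalIntegrable_const (.of_forall fun t ht => ?_)
    · exact ((hΨc.comp_continuousOn (continuousOn_path hT (h k))).mono hIoc).aestronglyMeasurable
        measurableSet_uIoc
    · refine hK _ (abs_le.mp ((abs_path_le (hIoc ht) _).trans ?_))
      gcongr
      exact hC k
    · exact (hΨc.tendsto _).comp (tendsto_path h_weak (hIoc ht))
  exact h_int.sub (((hFc.tendsto _).comp (tendsto_path h_weak ⟨hT, le_rfl⟩)).const_mul _)

theorem path_congr_ae {f f' : ℝ → ℝ} (hff' : f =ᵐ[volume.restrict (Icc 0 T)] f')
    (ht : t ∈ Icc 0 T) : path u₀ f t = path u₀ f' t := by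
  rw [path, path, intervalIntegral.integral_of_le ht.1, intervalIntegral.integral_of_le ht.1,
    integral_congr_ae (ae_restrict_of_ae_restrict_of_subset (Ioc_subset_Icc_of_mem ht) hff')]

theorem intervalIntegral_sq_eq_norm_sq (hT : 0 ≤ T) {f : ℝ → ℝ} {g : L2Icc T}
    (hfg : f =ᵐ[volume.restrict (Icc 0 T)] g) : ∫ t in (0 : ℝ)..T, f t ^ 2 = ‖g‖ ^ 2 := by
  rw [intervalIntegral.integral_of_le hT, ← integral_Icc_eq_integral_Ioc,
    ← real_inner_self_eq_norm_sq, L2.inner_def]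
  refine integral_congr_ae (hfg.mono fun t ht => ?_)
  simp [ht, sq]

theorem onsagerMachlup_eq_potential_add (hT : 0 ≤ T) {v h : ℝ → ℝ}
    (hh : MemLp h 2 (volume.restrict (Icc 0 T)))
    (hv : ∀ t ∈ Icc 0 T, v t = path u₀ h t) :
    (∫ t in (0 : ℝ)..T, Ψ (v t)) - (1 / σ ^ 2) * F (v T)
        + (1 / (2 * σ ^ 2)) * ∫ t in (0 : ℝ)..T, (h t) ^ 2
      = potential T σ u₀ Ψ F (hh.toLp h) + 1 / (2 * σ ^ 2) * ‖hh.toLp h‖ ^ 2 := by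
  have hv' : ∀ t ∈ Icc 0 T, v t = path u₀ (hh.toLp h) t := fun t ht =>
    (hv t ht).trans (path_congr_ae hh.coeFn_toLp.symm ht)
  have hΨ : ∫ t in (0 : ℝ)..T, Ψ (v t) = ∫ t in (0 : ℝ)..T, Ψ (path u₀ (hh.toLp h) t) :=
    intervalIntegral.integral_congr fun t ht => by
      rw [uIcc_of_le hT] at ht
      simp only [hv' t ht]
  rw [potential, hΨ, hv' T ⟨hT, le_rfl⟩, intervalIntegral_sq_eq_norm_sq hT hh.coeFn_toLp.symm]

end OnsagerMachlup

open OnsagerMachlup in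
/-- Existence of MAP estimators for the unconditioned diffusion (Section 6.1):
over E' = {v ∈ H¹([0,T];ℝ) : v(0) = u⁻} (paths parametrised by an L² weak
derivative g, with u(t) = u⁻ + ∫₀ᵗ g), the Onsager–Machlup functional
I₁(u) = ∫₀ᵀ Ψ(u(t))dt − σ⁻²F(u(T)) + (1/(2σ²))∫₀ᵀ|u'(t)|²dt attains its
infimum, provided Ψ is continuous and bounded below and F is continuous and
bounded above. -/
theorem stmt19 (T σ uminus : ℝ) (hT : 0 < T) (hσ : 0 < σ)
    (Ψ F : ℝ → ℝ) (hΨc : Continuous Ψ) (hΨbd : ∃ M, ∀ x, M ≤ Ψ x)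
    (hFc : Continuous F) (hFbd : ∃ M, ∀ x, F x ≤ M) :
    ∃ (u g : ℝ → ℝ),
      (MemLp g 2 (volume.restrict (Set.Icc (0:ℝ) T)) ∧
        ∀ t ∈ Set.Icc (0:ℝ) T, u t = uminus + ∫ s in (0:ℝ)..t, g s) ∧
      ∀ (v h : ℝ → ℝ),
        MemLp h 2 (volume.restrict (Set.Icc (0:ℝ) T)) →
        (∀ t ∈ Set.Icc (0:ℝ) T, v t = uminus + ∫ s in (0:ℝ)..t, h s) →
        (∫ t in (0:ℝ)..T, Ψ (u t)) - (1 / σ^2) * F (u T)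
            + (1 / (2 * σ^2)) * ∫ t in (0:ℝ)..T, (g t)^2
          ≤ (∫ t in (0:ℝ)..T, Ψ (v t)) - (1 / σ^2) * F (v T)
            + (1 / (2 * σ^2)) * ∫ t in (0:ℝ)..T, (h t)^2 := by
  obtain ⟨M, hM⟩ := hΨbd
  obtain ⟨N, hN⟩ := hFbd
  -- `Lp.SecondCountableTopology` (separability of `L²`) needs `p ≠ ∞` as a `Fact`.
  have : Fact ((2 : ℝ≥0∞) ≠ ∞) := ⟨ENNReal.ofNat_ne_top⟩
  obtain ⟨g, hg⟩ := exists_forall_add_mul_sq_norm_le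
    (A := fun f : L2Icc T => potential T σ uminus Ψ F f) (c := 1 / (2 * σ ^ 2)) (by positivity)
    (bddBelow_range_potential hT.le hΨc hM hN)
    (fun _ _ _ hC h_weak => tendsto_potential hT.le hΨc hFc hC h_weak)
  refine ⟨path uminus g, g, ⟨Lp.memLp g, fun _ _ => rfl⟩, fun v h hh hv => ?_⟩
  rw [onsagerMachlup_eq_potential_add hT.le (Lp.memLp g) (fun _ _ => rfl), Lp.toLp_coeFn,
    onsagerMachlup_eq_potential_add hT.le hh hv]
  exact hg _
end
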